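/- For integers m, n with gcd(m, n) = 1 and 3 ∤ (m + n), the integers c = m² − mn + n² and b = n(2m − n) satisfy gcd(b, c) = 1. -/

import Mathlib

/-!
A prime dividing `c = m² - mn + n²` cannot divide `n`, since `c ≡ m² (mod n)` and `m, n` are
coprime. Nor can it divide `2m - n`: modulo `2m - n` we have `c ≡ 3m²`, and `2m - n` is prime to
`m` (as `n` is) and to `3` (as `2m - n ≡ -(m + n) (mod 3)`). Hence `c` is prime to `b = n(2m - n)`.
-/

section CommRing

variable {R : Type*} [CommRing R] {m n : R}

theorem IsCoprime.sq_sub_mul_add_sq_right (h : IsCoprime m n) :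
    IsCoprime n (m ^ 2 - m * n + n ^ 2) := by
  have hm : IsCoprime n (m ^ 2) := h.symm.pow_right
  convert hm.add_mul_left_right (n - m) using 1
  ring

theorem IsCoprime.two_mul_sub_left (h : IsCoprime m n) : IsCoprime (2 * m - n) m := by
  convert h.symm.neg_left.add_mul_right_left 2 using 1
  ring

theorem IsCoprime.two_mul_sub_three (h3 : IsCoprime (m + n) 3) : IsCoprime (2 * m - n) 3 := by
  convert h3.neg_left.add_mul_left_left m using 1
  ring

theorem IsCoprime.two_mul_sub_sq_sub_mul_add_sq (h : IsCoprime m n) (h3 : IsCoprime (m + n) 3) :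
    IsCoprime (2 * m - n) (m ^ 2 - m * n + n ^ 2) := by
  have h3m : IsCoprime (2 * m - n) (3 * m ^ 2) :=
    h3.two_mul_sub_three.mul_right h.two_mul_sub_left.pow_right
  convert h3m.add_mul_left_right (-(m + n)) using 1
  ring

theorem IsCoprime.mul_two_mul_sub_sq_sub_mul_add_sq (h : IsCoprime m n)
    (h3 : IsCoprime (m + n) 3) :
    IsCoprime (n * (2 * m - n)) (m ^ 2 - m * n + n ^ 2) :=
  h.sq_sub_mul_add_sq_right.mul_left (h.two_mul_sub_sq_sub_mul_add_sq h3)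

end CommRing

theorem stmt_6 (m n : ℤ) (hmn : Int.gcd m n = 1) (h3 : ¬ (3 : ℤ) ∣ m + n)
    (b c : ℤ) (hb : b = n * (2 * m - n)) (hc : c = m ^ 2 - m * n + n ^ 2) :
    Int.gcd b c = 1 := by
  have h3' : IsCoprime (m + n) 3 := (Int.prime_three.coprime_iff_not_dvd.mpr h3).symm
  subst hb hc
  exact Int.isCoprime_iff_gcd_eq_one.mp
    ((Int.isCoprime_iff_gcd_eq_one.mpr hmn).mul_two_mul_sub_sq_sub_mul_add_sq h3')
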